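/- arXiv:1606.06841 — 2 statements merged into one kernel-verified Lean document; each statement's English description precedes it below -/
import Mathlib

section
/- Let H be a real Hilbert space, (Ω, Σ, ν) a σ-finite measure space, and φ : Ω → H a measurable map with ‖φ(x)‖_H ≤ C for all x ∈ Ω. Let p_0 and p be nonnegative probability density functions with respect to ν such that φ·p_0 and φ·p are Bochner ν-integrable, and set μ_0 = ∫ φ(x) p_0(x) ν(dx), μ = ∫ φ(x) p(x) ν(dx). Then ‖μ_0 − μ‖_H² ≤ 4 C² · ∫ (√(p_0(x)) − √(p(x)))² ν(dx); that is, the squared kernel-mean error is bounded by 4 C² times the squared Hellinger distance between p_0 and p. -/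
/-!
Write `|p₀ - p| = |√p₀ - √p| · (√p₀ + √p)`. Since `‖φ‖ ≤ C`, the distance between the kernel
means is at most `C ∫ |p₀ - p|`, and by Cauchy–Schwarz `(∫ |p₀ - p|)²` is at most the squared
Hellinger distance times `∫ (√p₀ + √p)² ≤ 2 (∫ p₀ + ∫ p) = 4`.
-/

open MeasureTheory

namespace MeasureTheory

variable {α : Type*} [MeasurableSpace α] {μ : Measure α}

theorem integral_mul_sq_le_integral_sq_mul_integral_sq {f g : α → ℝ}
    (hf : MemLp f 2 μ) (hg : MemLp g 2 μ) :
    (∫ x, f x * g x ∂μ) ^ 2 ≤ (∫ x, f x ^ 2 ∂μ) * ∫ x, g x ^ 2 ∂μ := by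
  have integral_mul_eq_inner {u v : α → ℝ} (hu : MemLp u 2 μ) (hv : MemLp v 2 μ) :
      ∫ x, u x * v x ∂μ = inner ℝ (hu.toLp u) (hv.toLp v) := by
    rw [L2.inner_def]
    refine integral_congr_ae ?_
    filter_upwards [hu.coeFn_toLp, hv.coeFn_toLp] with x hux hvx
    simp [hux, hvx, mul_comm]
  simp only [sq, integral_mul_eq_inner hf hg, integral_mul_eq_inner hf hf,
    integral_mul_eq_inner hg hg]
  exact real_inner_mul_inner_self_le _ _

theorem memLp_two_sqrt {p : α → ℝ} (hp : Integrable p μ) (hp_nonneg : ∀ x, 0 ≤ p x) :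
    MemLp (fun x => √(p x)) 2 μ :=
  (memLp_two_iff_integrable_sq (Real.continuous_sqrt.comp_aestronglyMeasurable hp.1)).2 <|
    hp.congr (.of_forall fun x => (Real.sq_sqrt (hp_nonneg x)).symm)

theorem sq_integral_abs_sub_le_mul_integral_sq_sqrt_sub {p₀ p : α → ℝ}
    (hp₀ : Integrable p₀ μ) (hp : Integrable p μ)
    (hp₀_nonneg : ∀ x, 0 ≤ p₀ x) (hp_nonneg : ∀ x, 0 ≤ p x) :
    (∫ x, |p₀ x - p x| ∂μ) ^ 2 ≤
      2 * (∫ x, p₀ x ∂μ + ∫ x, p x ∂μ) * ∫ x, (√(p₀ x) - √(p x)) ^ 2 ∂μ := by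
  have hs₀ := memLp_two_sqrt hp₀ hp₀_nonneg
  have hs := memLp_two_sqrt hp hp_nonneg
  have abs_sub_eq x : |p₀ x - p x| = |√(p₀ x) - √(p x)| * (√(p₀ x) + √(p x)) := by
    rw [← abs_of_nonneg (by positivity : 0 ≤ √(p₀ x) + √(p x)), ← abs_mul, mul_comm, ← sq_sub_sq,
      Real.sq_sqrt (hp₀_nonneg x), Real.sq_sqrt (hp_nonneg x)]
  have integral_sq_add_le : ∫ x, (√(p₀ x) + √(p x)) ^ 2 ∂μ ≤ 2 * (∫ x, p₀ x ∂μ + ∫ x, p x ∂μ) := by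
    rw [← integral_add hp₀ hp, ← integral_const_mul]
    refine integral_mono (hs₀.add hs).integrable_sq ((hp₀.add hp).const_mul 2) fun x => ?_
    simpa only [Real.sq_sqrt (hp₀_nonneg x), Real.sq_sqrt (hp_nonneg x)] using
      add_sq_le (a := √(p₀ x)) (b := √(p x))
  calc (∫ x, |p₀ x - p x| ∂μ) ^ 2
      = (∫ x, |√(p₀ x) - √(p x)| * (√(p₀ x) + √(p x)) ∂μ) ^ 2 := by simp only [abs_sub_eq]
    _ ≤ (∫ x, (√(p₀ x) - √(p x)) ^ 2 ∂μ) * ∫ x, (√(p₀ x) + √(p x)) ^ 2 ∂μ := by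
      simpa only [Pi.sub_apply, Pi.add_apply, Pi.abs_apply, sq_abs] using
        integral_mul_sq_le_integral_sq_mul_integral_sq (hs₀.sub hs).abs (hs₀.add hs)
    _ ≤ (∫ x, (√(p₀ x) - √(p x)) ^ 2 ∂μ) * (2 * (∫ x, p₀ x ∂μ + ∫ x, p x ∂μ)) :=
      mul_le_mul_of_nonneg_left integral_sq_add_le (integral_nonneg fun x => sq_nonneg _)
    _ = _ := mul_comm _ _

theorem norm_integral_smul_sub_integral_smul_le {E : Type*} [NormedAddCommGroup E]
    [NormedSpace ℝ E] {φ : α → E} {C : ℝ} (hC : ∀ x, ‖φ x‖ ≤ C) {p₀ p : α → ℝ}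
    (hp₀ : Integrable p₀ μ) (hp : Integrable p μ)
    (hp₀φ : Integrable (fun x => p₀ x • φ x) μ) (hpφ : Integrable (fun x => p x • φ x) μ) :
    ‖(∫ x, p₀ x • φ x ∂μ) - ∫ x, p x • φ x ∂μ‖ ≤ C * ∫ x, |p₀ x - p x| ∂μ := by
  rw [← integral_sub hp₀φ hpφ, ← integral_const_mul]
  refine norm_integral_le_of_norm_le ((hp₀.sub hp).abs.const_mul C) (.of_forall fun x => ?_)
  rw [← sub_smul, norm_smul, Real.norm_eq_abs, mul_comm C]
  exact mul_le_mul_of_nonneg_left (hC x) (abs_nonneg _)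

end MeasureTheory

theorem kernel_mean_hellinger_bound_general
    {H : Type*} [NormedAddCommGroup H] [InnerProductSpace ℝ H]
    {Ω : Type*} [MeasurableSpace Ω] (ν : Measure Ω)
    (φ : Ω → H)
    (C : ℝ) (hC : ∀ x, ‖φ x‖ ≤ C)
    (p₀ p : Ω → ℝ)
    (hp₀pos : ∀ x, 0 ≤ p₀ x) (hppos : ∀ x, 0 ≤ p x)
    (hp₀int : ∫ x, p₀ x ∂ν = 1) (hpint : ∫ x, p x ∂ν = 1)
    (hφp₀ : Integrable (fun x => p₀ x • φ x) ν)
    (hφp : Integrable (fun x => p x • φ x) ν) :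
    ‖(∫ x, p₀ x • φ x ∂ν) - ∫ x, p x • φ x ∂ν‖ ^ 2 ≤
      4 * C ^ 2 * ∫ x, (Real.sqrt (p₀ x) - Real.sqrt (p x)) ^ 2 ∂ν := by
  have hp₀ : Integrable p₀ ν := .of_integral_ne_zero (by simp [hp₀int])
  have hp : Integrable p ν := .of_integral_ne_zero (by simp [hpint])
  have hL1 := sq_integral_abs_sub_le_mul_integral_sq_sqrt_sub hp₀ hp hp₀pos hppos
  rw [hp₀int, hpint] at hL1
  calc ‖(∫ x, p₀ x • φ x ∂ν) - ∫ x, p x • φ x ∂ν‖ ^ 2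
      ≤ (C * ∫ x, |p₀ x - p x| ∂ν) ^ 2 :=
        pow_le_pow_left₀ (norm_nonneg _)
          (norm_integral_smul_sub_integral_smul_le hC hp₀ hp hφp₀ hφp) 2
    _ = C ^ 2 * (∫ x, |p₀ x - p x| ∂ν) ^ 2 := mul_pow _ _ _
    _ ≤ C ^ 2 * (2 * (1 + 1) * ∫ x, (√(p₀ x) - √(p x)) ^ 2 ∂ν) :=
      mul_le_mul_of_nonneg_left hL1 (sq_nonneg C)
    _ = 4 * C ^ 2 * ∫ x, (√(p₀ x) - √(p x)) ^ 2 ∂ν := by ring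

/-- the squared kernel-mean error is bounded by `4 C²` times the
squared Hellinger distance between the densities. -/
theorem kernel_mean_hellinger_bound
    {H : Type*} [NormedAddCommGroup H] [InnerProductSpace ℝ H] [CompleteSpace H]
    {Ω : Type*} [MeasurableSpace Ω] (ν : Measure Ω) [SigmaFinite ν]
    (φ : Ω → H) (hφmeas : StronglyMeasurable φ)
    (C : ℝ) (hC : ∀ x, ‖φ x‖ ≤ C)
    (p₀ p : Ω → ℝ)
    (hp₀pos : ∀ x, 0 ≤ p₀ x) (hppos : ∀ x, 0 ≤ p x)
    (hp₀int : ∫ x, p₀ x ∂ν = 1) (hpint : ∫ x, p x ∂ν = 1)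
    (hφp₀ : Integrable (fun x => p₀ x • φ x) ν)
    (hφp : Integrable (fun x => p x • φ x) ν) :
    ‖(∫ x, p₀ x • φ x ∂ν) - ∫ x, p x • φ x ∂ν‖ ^ 2 ≤
      4 * C ^ 2 * ∫ x, (Real.sqrt (p₀ x) - Real.sqrt (p x)) ^ 2 ∂ν :=
  kernel_mean_hellinger_bound_general ν φ C hC p₀ p hp₀pos hppos hp₀int hpint hφp₀ hφp
end

section
/- Let H be a real inner product space, n ≥ 1, and v_1, …, v_n ∈ H with invertible Gram matrix K. Let μ_0, μ ∈ H, let μ_0(V) and μ(V) ∈ ℝ^n have entries ⟨μ_0, v_j⟩ and ⟨μ, v_j⟩ respectively, and define the interpolants μ_{0,n} = Σ_i (K^{-1} μ_0(V))_i v_i and μ_n = Σ_i (K^{-1} μ(V))_i v_i. Then ‖μ_0 − μ_n‖² ≤ ‖μ_0 − μ_{0,n}‖² + n^{1/2} · ‖μ_0 − μ‖². -/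
open Matrix
open scoped RealInnerProductSpace

/-- the kernel-interpolant error for the perturbed mean element is
bounded by the idealised interpolation error plus `√n` times the squared
kernel-mean estimation error. -/
theorem dpmbq_interpolant_error_decomposition
    {H : Type*} [NormedAddCommGroup H] [InnerProductSpace ℝ H]
    {n : ℕ} (hn : 1 ≤ n) (v : Fin n → H)
    (K : Matrix (Fin n) (Fin n) ℝ)
    (hK : ∀ i j, K i j = ⟪v i, v j⟫) (hKinv : IsUnit K.det)
    (μ₀ μ : H) :
    ‖μ₀ - ∑ i, (K⁻¹ *ᵥ fun j => ⟪μ, v j⟫) i • v i‖ ^ 2 ≤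
      ‖μ₀ - ∑ i, (K⁻¹ *ᵥ fun j => ⟪μ₀, v j⟫) i • v i‖ ^ 2 +
        Real.sqrt n * ‖μ₀ - μ‖ ^ 2 := by
  set c : H → Fin n → ℝ := fun u => K⁻¹ *ᵥ fun j => ⟪u, v j⟫ with hc
  set P : H → H := fun u => ∑ i, c u i • v i with hP
  -- orthogonality of the residual to each v j
  have horth : ∀ (u : H) (j : Fin n), ⟪v j, u - P u⟫ = 0 := by
    intro u j
    have h1 : ⟪v j, P u⟫ = ⟪u, v j⟫ := by
      simp only [hP]
      rw [inner_sum]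
      have hterm : ∀ i, ⟪v j, c u i • v i⟫ = K j i * c u i := by
        intro i; rw [real_inner_smul_right, hK, real_inner_comm]; ring
      rw [Finset.sum_congr rfl (fun i _ => hterm i)]
      have h2 : ∑ i, K j i * c u i = (K *ᵥ c u) j := rfl
      rw [h2, hc]
      simp only [Matrix.mulVec_mulVec, Matrix.mul_nonsing_inv K hKinv, Matrix.one_mulVec]
    rw [inner_sub_right, h1, real_inner_comm, sub_self]
  -- residual orthogonal to anything in the span, i.e. to P w
  have horthP : ∀ (u w : H), ⟪P w, u - P u⟫ = 0 := by
    intro u w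
    simp only [hP, sum_inner, real_inner_smul_left]
    refine Finset.sum_eq_zero fun i _ => ?_
    rw [horth u i, mul_zero]
  -- linearity
  have hlin : P μ₀ - P μ = P (μ₀ - μ) := by
    simp only [hP, hc, ← Finset.sum_sub_distrib, ← sub_smul]
    refine Finset.sum_congr rfl fun i _ => ?_
    congr 1
    have h3 : (fun j => ⟪μ₀ - μ, v j⟫) = (fun j => ⟪μ₀, v j⟫) - fun j => ⟪μ, v j⟫ := by
      ext j; simp [inner_sub_left]
    rw [h3, Matrix.mulVec_sub]
    rfl
  set e := μ₀ - μ with he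
  -- decomposition
  have hdec : μ₀ - P μ = (μ₀ - P μ₀) + P e := by
    rw [← hlin]; abel
  have hnorm2 : ‖μ₀ - P μ‖ ^ 2 = ‖μ₀ - P μ₀‖ ^ 2 + ‖P e‖ ^ 2 := by
    rw [hdec, norm_add_sq_real]
    have : ⟪μ₀ - P μ₀, P e⟫ = 0 := by
      rw [real_inner_comm]; exact horthP μ₀ e
    rw [this]; ring
  -- ‖P e‖ ≤ ‖e‖
  have hPe : ‖P e‖ ≤ ‖e‖ := by
    have h4 : ‖P e‖ ^ 2 = ⟪P e, e⟫ := by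
      have := horthP e e
      rw [inner_sub_right] at this
      have h5 : ⟪P e, e⟫ = ⟪P e, P e⟫ := by linarith
      rw [h5, real_inner_self_eq_norm_sq]
    nlinarith [abs_real_inner_le_norm (P e) e, le_abs_self (⟪P e, e⟫ : ℝ),
      norm_nonneg (P e), norm_nonneg e]
  have hsqrt : (1 : ℝ) ≤ Real.sqrt n := by
    rw [show (1:ℝ) = Real.sqrt 1 by simp]
    exact Real.sqrt_le_sqrt (by exact_mod_cast hn)
  calc ‖μ₀ - P μ‖ ^ 2 = ‖μ₀ - P μ₀‖ ^ 2 + ‖P e‖ ^ 2 := hnorm2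
    _ ≤ ‖μ₀ - P μ₀‖ ^ 2 + Real.sqrt n * ‖e‖ ^ 2 := by
        nlinarith [norm_nonneg (P e), norm_nonneg e]
end
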